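/- Let I be a small cofiltered category and let X : I → (simplicial profinite sets) be a diagram with limit lim_i X_i (computed levelwise in Profinite). Then the canonical map π₀(lim_i X_i) → lim_i π₀(X_i) is an isomorphism of profinite spaces. -/

import Mathlib

/-!
Surjectivity: a point of `lim π₀(X i)` is a compatible family of classes, and their fibres in the
`(X i)₀` form a cofiltered system of nonempty compact Hausdorff spaces, which has a point in its
limit.

Injectivity: two points of a profinite space `B` have the same image in the coequalizer of
`f g : A ⟶ B` iff no clopen `U ⊆ B` with `f ⁻¹' U = g ⁻¹' U` separates them. Such a clopen
`U ⊆ (lim X)₀` is the preimage of a clopen `V ⊆ (X i)₀`; the closed set of 1-simplices of `X i`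
on which `d₀ ⁻¹' V` and `d₁ ⁻¹' V` differ has empty preimage in the limit, so by compactness it
becomes empty after pulling back to some `X j`, where the pullback of `V` separates the images of
the two points.
-/

universe u

open CategoryTheory Simplicial Limits Opposite

/-- The functor `π₀ : sProfinite → Profinite`, sending a simplicial profinite set `X` to the
coequalizer in `Profinite` of the two face maps `d₀, d₁ : X₁ ⇉ X₀`. -/
noncomputable def profinitePi0 : SimplicialObject Profinite.{u} ⥤ Profinite.{u} where
  obj X := coequalizer (X.δ (0 : Fin 2)) (X.δ (1 : Fin 2))
  map {X Y} f :=
    coequalizer.desc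
      (f.app (op (SimplexCategory.mk 0)) ≫ coequalizer.π (Y.δ (0 : Fin 2)) (Y.δ (1 : Fin 2)))
      (by
        have h0 : X.δ (0 : Fin 2) ≫ f.app (op (SimplexCategory.mk 0)) =
            f.app (op (SimplexCategory.mk 1)) ≫ Y.δ (0 : Fin 2) := f.naturality _
        have h1 : X.δ (1 : Fin 2) ≫ f.app (op (SimplexCategory.mk 0)) =
            f.app (op (SimplexCategory.mk 1)) ≫ Y.δ (1 : Fin 2) := f.naturality _
        rw [← Category.assoc, h0, ← Category.assoc, h1, Category.assoc, Category.assoc,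
          coequalizer.condition])
  map_id X := by
    apply coequalizer.hom_ext
    simp
  map_comp f g := by
    apply coequalizer.hom_ext
    simp

open scoped symmDiff

namespace Profinite

section CofilteredLimit

variable {I : Type u} [SmallCategory I] [IsCofilteredOrEmpty I] {F : I ⥤ Profinite.{u}}
  {c : Cone F}

theorem exists_forall_π_app_mem_of_isLimit (hc : IsLimit c) (C : ∀ i, Set (F.obj i))
    (hC : ∀ i, IsClosed (C i)) (hne : ∀ i, (C i).Nonempty)
    (hmap : ∀ {i j} (φ : i ⟶ j), Set.MapsTo (F.map φ) (C i) (C j)) :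
    ∃ x : c.pt, ∀ i, c.π.app i x ∈ C i := by
  let G : I ⥤ TopCat.{u} :=
    { obj i := TopCat.of (C i)
      map φ := TopCat.ofHom
        ⟨(hmap φ).restrict, (ConcreteCategory.hom (F.map φ)).continuous.restrict (hmap φ)⟩
      map_id i := by ext x; change F.map (𝟙 i) x.1 = x.1; simp
      map_comp φ ψ := by ext x; change F.map (φ ≫ ψ) x.1 = F.map ψ (F.map φ x.1); simp }
  have : ∀ i, Nonempty (G.obj i) := fun i ↦ (hne i).to_subtype
  have : ∀ i, CompactSpace (G.obj i) := fun i ↦ isCompact_iff_compactSpace.mp (hC i).isCompact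
  have : ∀ i, T2Space (G.obj i) := fun i ↦ inferInstanceAs (T2Space (C i))
  obtain ⟨u⟩ := TopCat.nonempty_limitCone_of_compact_t2_cofiltered_system G
  let hc' := isLimitOfPreserves (forget Profinite) hc
  refine ⟨(Types.isLimitEquivSections hc').symm
    ⟨fun i ↦ (u.1 i).1, fun φ ↦ congrArg Subtype.val (u.2 φ)⟩, fun i ↦ ?_⟩
  exact (Types.isLimitEquivSections_symm_apply hc' _ i).symm ▸ (u.1 i).2

theorem exists_preimage_map_eq_empty_of_isLimit (hc : IsLimit c) {i : I} {S : Set (F.obj i)}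
    (hS : IsClosed S) (h : c.π.app i ⁻¹' S = ∅) :
    ∃ (j : I) (φ : j ⟶ i), F.map φ ⁻¹' S = ∅ := by
  -- Otherwise the sets `F.map φ ⁻¹' S` form a cofiltered system of nonempty closed sets
  -- indexed by `Over i`, and a point of its limit lies in `c.π.app i ⁻¹' S`.
  by_contra! hne
  obtain ⟨x, hx⟩ := exists_forall_π_app_mem_of_isLimit
    ((Functor.Initial.isLimitWhiskerEquiv (Over.forget i) c).symm hc)
    (fun k ↦ F.map k.hom ⁻¹' S)
    (fun k ↦ hS.preimage (ConcreteCategory.hom (F.map k.hom)).continuous)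
    (fun k ↦ hne k.left k.hom)
    (fun {k l} ψ ↦ by
      rintro (y : F.obj k.left) (hy : F.map k.hom y ∈ S)
      show F.map l.hom (F.map ψ.left y) ∈ S
      rwa [← ConcreteCategory.comp_apply, ← F.map_comp, Over.w])
  have hxS := hx (Over.mk (𝟙 i))
  simp only [Over.mk_left, Over.mk_hom, F.map_id] at hxS
  exact h.subset hxS

end CofilteredLimit

theorem coequalizer_π_surjective {A B : Profinite.{u}} (f g : A ⟶ B) :
    Function.Surjective (coequalizer.π f g) := by
  rw [← Profinite.epi_iff_surjective]
  infer_instance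

theorem coequalizer_π_apply_eq_iff {A B : Profinite.{u}} (f g : A ⟶ B) (a b : B) :
    coequalizer.π f g a = coequalizer.π f g b ↔
      ∀ U : Set B, IsClopen U → f ⁻¹' U = g ⁻¹' U → (a ∈ U ↔ b ∈ U) := by
  classical
  constructor
  · intro h U hU hfg
    let χ : B ⟶ Profinite.of (ULift.{u} Bool) := ConcreteCategory.ofHom
      ⟨fun x ↦ ULift.up (U.boolIndicator x),
        continuous_uliftUp.comp ((continuous_boolIndicator_iff_isClopen U).mpr hU)⟩
    have hχ : f ≫ χ = g ≫ χ := by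
      ext x
      have hx : f x ∈ U ↔ g x ∈ U := Set.ext_iff.mp hfg x
      simp [χ, Set.boolIndicator, hx]
    have hab : χ a = χ b := by
      rw [← coequalizer.π_desc χ hχ, ConcreteCategory.comp_apply, ConcreteCategory.comp_apply,
        h]
    simpa [χ, Set.boolIndicator] using hab
  · intro h
    by_contra hne
    obtain ⟨W, hW, haW, hbW⟩ := exists_isClopen_of_totally_separated hne
    have hW' := hW.preimage (ConcreteCategory.hom (coequalizer.π f g)).continuous
    refine hbW ((h _ hW' ?_).mp haW)
    rw [← Set.preimage_comp, ← Set.preimage_comp, ← ConcreteCategory.coe_comp,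
      ← ConcreteCategory.coe_comp, coequalizer.condition]

section ParallelPair

variable {I : Type u} [SmallCategory I] [IsCofiltered I] {A B : I ⥤ Profinite.{u}}
  {f g : A ⟶ B} {cA : Cone A} {cB : Cone B} {f' g' : cA.pt ⟶ cB.pt}

theorem exists_isClopen_preimage_eq_of_cofiltered (hA : IsLimit cA) (hB : IsLimit cB)
    (hf : ∀ i, f' ≫ cB.π.app i = cA.π.app i ≫ f.app i)
    (hg : ∀ i, g' ≫ cB.π.app i = cA.π.app i ≫ g.app i)
    {U : Set cB.pt} (hU : IsClopen U) (hU' : f' ⁻¹' U = g' ⁻¹' U) :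
    ∃ (j : I) (V : Set (B.obj j)), IsClopen V ∧ f.app j ⁻¹' V = g.app j ⁻¹' V ∧
      U = cB.π.app j ⁻¹' V := by
  obtain ⟨i, V, hV, rfl⟩ := exists_isClopen_of_cofiltered cB hB hU
  have hS : IsClosed ((f.app i ⁻¹' V) ∆ (g.app i ⁻¹' V)) := by
    have hfV := hV.preimage (ConcreteCategory.hom (f.app i)).continuous
    have hgV := hV.preimage (ConcreteCategory.hom (g.app i)).continuous
    rw [Set.symmDiff_def]
    exact ((hfV.diff hgV).union (hgV.diff hfV)).isClosed
  obtain ⟨j, φ, hφ⟩ := exists_preimage_map_eq_empty_of_isLimit hA hS (by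
    simp only [Set.preimage_symmDiff, ← Set.preimage_comp, ← ConcreteCategory.coe_comp, ← hf,
      ← hg]
    simp only [ConcreteCategory.coe_comp, Set.preimage_comp, hU', symmDiff_self,
      Set.bot_eq_empty])
  refine ⟨j, B.map φ ⁻¹' V, hV.preimage (ConcreteCategory.hom (B.map φ)).continuous, ?_,
    ?_⟩
  · simp only [← Set.preimage_comp, ← ConcreteCategory.coe_comp, ← f.naturality,
      ← g.naturality]
    simpa only [Set.preimage_symmDiff, ← Set.preimage_comp, ← ConcreteCategory.coe_comp,
      Set.symmDiff_eq_empty] using hφ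
  · rw [← Set.preimage_comp, ← ConcreteCategory.coe_comp, cB.w]

theorem coequalizer_π_apply_eq_of_cofiltered (hA : IsLimit cA) (hB : IsLimit cB)
    (hf : ∀ i, f' ≫ cB.π.app i = cA.π.app i ≫ f.app i)
    (hg : ∀ i, g' ≫ cB.π.app i = cA.π.app i ≫ g.app i) {a b : cB.pt}
    (h : ∀ i, coequalizer.π (f.app i) (g.app i) (cB.π.app i a) =
      coequalizer.π (f.app i) (g.app i) (cB.π.app i b)) :
    coequalizer.π f' g' a = coequalizer.π f' g' b := by
  rw [coequalizer_π_apply_eq_iff]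
  intro U hU hU'
  obtain ⟨j, V, hV, hV', rfl⟩ := exists_isClopen_preimage_eq_of_cofiltered hA hB hf hg hU hU'
  exact (coequalizer_π_apply_eq_iff _ _ _ _).mp (h j) V hV hV'

end ParallelPair

end Profinite

section SimplicialProfinite

variable {I : Type u} [SmallCategory I] (X : I ⥤ SimplicialObject Profinite.{u})

theorem profinitePi0_map_π_apply {Y Z : SimplicialObject Profinite.{u}} (f : Y ⟶ Z)
    (y : Y _⦋0⦌) :
    profinitePi0.map f (coequalizer.π (Y.δ 0) (Y.δ 1) y) =
      coequalizer.π (Z.δ 0) (Z.δ 1) (f.app _ y) := by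
  have h : coequalizer.π (Y.δ 0) (Y.δ 1) ≫ profinitePi0.map f =
      f.app _ ≫ coequalizer.π (Z.δ 0) (Z.δ 1) := coequalizer.π_desc _ _
  exact ConcreteCategory.congr_hom h y

theorem limit_π_limit_post_profinitePi0_apply (j : I) (x : (limit X) _⦋0⦌) :
    limit.π (X ⋙ profinitePi0) j
        (limit.post X profinitePi0 (coequalizer.π ((limit X).δ 0) ((limit X).δ 1) x)) =
      coequalizer.π ((X.obj j).δ 0) ((X.obj j).δ 1) ((limit.π X j).app _ x) :=
  (ConcreteCategory.congr_hom (limit.post_π X profinitePi0 j) _).trans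
    (profinitePi0_map_π_apply _ x)

noncomputable def isLimitMapConeEvaluation (n : ℕ) :
    IsLimit (((evaluation _ _).obj (op ⦋n⦌)).mapCone (limit.cone X)) :=
  isLimitOfPreserves _ (limit.isLimit X)

theorem profinitePi0_limit_post_injective [IsCofiltered I] :
    Function.Injective (limit.post X profinitePi0) := by
  let δ (k : Fin 2) :
      X ⋙ (evaluation _ _).obj (op ⦋1⦌) ⟶ X ⋙ (evaluation _ _).obj (op ⦋0⦌) :=
    Functor.whiskerLeft X ((evaluation _ _).map (SimplexCategory.δ k).op)
  intro q q' hq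
  obtain ⟨a, rfl⟩ := Profinite.coequalizer_π_surjective _ _ q
  obtain ⟨b, rfl⟩ := Profinite.coequalizer_π_surjective _ _ q'
  refine Profinite.coequalizer_π_apply_eq_of_cofiltered (f := δ 0) (g := δ 1)
    (isLimitMapConeEvaluation X 1) (isLimitMapConeEvaluation X 0)
    (fun i ↦ (limit.π X i).naturality _) (fun i ↦ (limit.π X i).naturality _) fun i ↦ ?_
  have hqi := congrArg (limit.π (X ⋙ profinitePi0) i) hq
  rwa [limit_π_limit_post_profinitePi0_apply, limit_π_limit_post_profinitePi0_apply] at hqi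

theorem profinitePi0_limit_post_surjective [IsCofilteredOrEmpty I] :
    Function.Surjective (limit.post X profinitePi0) := by
  intro y
  let s (j : I) : profinitePi0.obj (X.obj j) := limit.π (X ⋙ profinitePi0) j y
  obtain ⟨x, hx⟩ := Profinite.exists_forall_π_app_mem_of_isLimit (isLimitMapConeEvaluation X 0)
    (fun j ↦ coequalizer.π ((X.obj j).δ 0) ((X.obj j).δ 1) ⁻¹' {s j})
    (fun j ↦ isClosed_singleton.preimage
      (ConcreteCategory.hom (coequalizer.π ((X.obj j).δ 0) ((X.obj j).δ 1))).continuous)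
    (fun j ↦ Profinite.coequalizer_π_surjective _ _ (s j))
    (fun {j k} φ ↦ by
      rintro z (hz : coequalizer.π ((X.obj j).δ 0) ((X.obj j).δ 1) z = s j)
      change coequalizer.π ((X.obj k).δ 0) ((X.obj k).δ 1) ((X.map φ).app _ z) = s k
      rw [← profinitePi0_map_π_apply, hz]
      exact limit.w_apply (X ⋙ profinitePi0) φ y)
  refine ⟨coequalizer.π ((limit X).δ 0) ((limit X).δ 1) x,
    Concrete.limit_ext (X ⋙ profinitePi0) _ _ fun j ↦ ?_⟩
  rw [limit_π_limit_post_profinitePi0_apply]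
  exact hx j

end SimplicialProfinite

theorem pi0_cofiltered_limit_comparison_isIso
    (I : Type u) [SmallCategory I] [IsCofiltered I]
    (X : I ⥤ SimplicialObject Profinite.{u}) :
    IsIso (limit.post X profinitePi0) :=
  CompHausLike.isIso_of_bijective _
    ⟨profinitePi0_limit_post_injective X, profinitePi0_limit_post_surjective X⟩
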